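/- For every Shapley network design game with k players, every strategy profile N minimizing Rosenthal's potential Φ satisfies cost(N) ≤ H_k · cost(O), where O is a social optimum. In particular, the potential-optimal price of anarchy, and hence the price of stability, of k-player Shapley network design games is at most H_k. -/
import Mathlib


/-- The `n`-th harmonic number `H_n = ∑_{i=1}^n 1/i`, as a real number. -/
noncomputable def harmonicR (n : ℕ) : ℝ := ∑ i ∈ Finset.range n, (1 : ℝ) / (i + 1)

/-- A Shapley network design game with `k` players on a finite undirected graph:
an undirected simple graph `G` on the vertex type `V`, positive edge costs `c`,
and terminal pairs `s i`, `t i` for each player `i`. -/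
structure ShapleyGame (V : Type) [Fintype V] [DecidableEq V] (k : ℕ) where
  G : SimpleGraph V
  c : Sym2 V → ℝ
  c_pos : ∀ e ∈ G.edgeSet, 0 < c e
  s : Fin k → V
  t : Fin k → V

namespace ShapleyGame

variable {V : Type} [Fintype V] [DecidableEq V] {k : ℕ}

/-- A strategy profile: a simple `s i`–`t i` path for each player `i`. -/
abbrev Profile (g : ShapleyGame V k) : Type :=
  ∀ i : Fin k, g.G.Path (g.s i) (g.t i)

/-- `k_e`: the number of players whose path uses edge `e` in profile `P`. -/
def ke (g : ShapleyGame V k) (P : g.Profile) (e : Sym2 V) : ℕ :=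
  (Finset.univ.filter fun i : Fin k => e ∈ (P i).1.edges).card

/-- The set `E(P)` of edges used by at least one player in profile `P`. -/
def profileEdges (g : ShapleyGame V k) (P : g.Profile) : Finset (Sym2 V) :=
  Finset.univ.filter fun e : Sym2 V => ∃ i : Fin k, e ∈ (P i).1.edges

/-- The individual cost of player `i`: each edge cost is shared equally
among the players using the edge. -/
noncomputable def playerCost (g : ShapleyGame V k) (P : g.Profile) (i : Fin k) : ℝ :=
  ∑ e ∈ (P i).1.edges.toFinset, g.c e / (g.ke P e)

/-- The social cost of a profile: total cost of all used edges. -/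
noncomputable def socialCost (g : ShapleyGame V k) (P : g.Profile) : ℝ :=
  ∑ e ∈ g.profileEdges P, g.c e

/-- Rosenthal's potential `Φ(P) = ∑_{e ∈ E(P)} H_{k_e} · c_e`. -/
noncomputable def potential (g : ShapleyGame V k) (P : g.Profile) : ℝ :=
  ∑ e ∈ g.profileEdges P, harmonicR (g.ke P e) * g.c e

/-- `P` is a Nash equilibrium: no player can decrease her individual cost
by unilaterally switching to another simple path. -/
def IsNash (g : ShapleyGame V k) (P : g.Profile) : Prop :=
  ∀ (i : Fin k) (Q : g.G.Path (g.s i) (g.t i)),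
    g.playerCost P i ≤ g.playerCost (Function.update P i Q) i

/-- `P` is a social optimum: it minimizes the social cost over all profiles. -/
def IsSocialOpt (g : ShapleyGame V k) (P : g.Profile) : Prop :=
  ∀ Q : g.Profile, g.socialCost P ≤ g.socialCost Q

/-- `P` is a potential minimizer: it minimizes Rosenthal's potential over all profiles. -/
def IsPotMin (g : ShapleyGame V k) (P : g.Profile) : Prop :=
  ∀ Q : g.Profile, g.potential P ≤ g.potential Q

/-- `P^j`: the set of edges used by exactly `j` players in profile `P`. -/
def exactly (g : ShapleyGame V k) (P : g.Profile) (j : ℕ) : Finset (Sym2 V) :=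
  (g.profileEdges P).filter fun e => g.ke P e = j

/-- `|M|`: the total cost of a set of edges. -/
noncomputable def csum (g : ShapleyGame V k) (M : Finset (Sym2 V)) : ℝ := ∑ e ∈ M, g.c e

end ShapleyGame

lemma harmonicR_mono : Monotone harmonicR := fun a b h =>
  Finset.sum_le_sum_of_subset_of_nonneg (Finset.range_subset_range.2 h) (by intros; positivity)

lemma one_le_harmonicR {n : ℕ} (hn : 1 ≤ n) : 1 ≤ harmonicR n := by
  have := harmonicR_mono hn
  simpa [harmonicR] using this

/-- every potential minimizer `N` satisfies `cost(N) ≤ H_k · cost(O)`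
for a social optimum `O`; hence the potential-optimal price of anarchy, and thus
the price of stability, is at most `H_k`. -/
theorem potMin_cost_le_Hk {V : Type} [Fintype V] [DecidableEq V] {k : ℕ}
    (g : ShapleyGame V k) (N O : g.Profile)
    (hN : g.IsPotMin N) (hO : g.IsSocialOpt O) :
    g.socialCost N ≤ harmonicR k * g.socialCost O := by
  have hc : ∀ (P : g.Profile), ∀ e ∈ g.profileEdges P, 0 < g.c e := by
    intro P e he
    simp only [ShapleyGame.profileEdges, Finset.mem_filter] at he
    obtain ⟨-, i, hi⟩ := he
    exact g.c_pos e ((P i).1.edges_subset_edgeSet hi)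
  have hke1 : ∀ e ∈ g.profileEdges N, 1 ≤ g.ke N e := by
    intro e he
    simp only [ShapleyGame.profileEdges, Finset.mem_filter] at he
    obtain ⟨-, i, hi⟩ := he
    exact Finset.card_pos.2 ⟨i, by simp [ShapleyGame.ke, hi]⟩
  have hkek : ∀ (P : g.Profile) (e : Sym2 V), g.ke P e ≤ k := fun P e =>
    (Finset.card_filter_le Finset.univ _).trans (by simp)
  have h1 : g.socialCost N ≤ g.potential N := by
    apply Finset.sum_le_sum
    intro e he
    have h := hc N e he
    nlinarith [one_le_harmonicR (hke1 e he)]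
  have h3 : g.potential O ≤ harmonicR k * g.socialCost O := by
    rw [ShapleyGame.socialCost, Finset.mul_sum]
    apply Finset.sum_le_sum
    intro e he
    have h := hc O e he
    have := harmonicR_mono (hkek O e)
    nlinarith
  linarith [hN O]
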